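/- arXiv:1710.11088 — 4 statements merged into one kernel-verified Lean document; each statement's English description precedes it below -/
import Mathlib

section
/- Let J_O(η) be the 6×6 block matrix diag{I_3, J_θ(η)} where J_θ(η) is the Euler-angle rate matrix for the ZYX (roll-pitch-yaw) convention with pitch angle θ. Then the spectral norm of the inverse satisfies ‖J_O(η)^{-1}‖ = √(1 + |sin θ|) ≤ √2 for all θ ∈ (−π/2, π/2). -/
/-! The Gram matrix of `J_θ(η)⁻¹` is `!![1, 0, -sin θ; 0, 1, 0; -sin θ, 0, 1]`, so
`‖J_O(η)⁻¹ v‖² = ‖v‖² - 2 sin θ · v₄ v₆`. Since `2 |v₄ v₆| ≤ v₄² + v₆²`, this is at most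
`(1 + |sin θ|) ‖v‖²`, with equality at `v = e₄ - sign(sin θ) e₆`. -/

open Matrix Real

/-- Spectral (ℓ²-operator) norm of a real matrix. -/
noncomputable def specNorm {m n : Type*} [Fintype m] [Fintype n] [DecidableEq n]
    (A : Matrix m n ℝ) : ℝ :=
  ‖LinearMap.toContinuousLinearMap (Matrix.toEuclideanLin A)‖

/-- The Euler-angle rate matrix `J_θ(η)⁻¹` mapping `η̇` to `ω` for the ZYX
(roll-pitch-yaw) convention, with roll `φ` and pitch `θ`. -/
noncomputable def eulerRateInv (φ θ : ℝ) : Matrix (Fin 3) (Fin 3) ℝ :=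
  !![1, 0, -Real.sin θ;
     0, Real.cos φ, Real.cos θ * Real.sin φ;
     0, -Real.sin φ, Real.cos θ * Real.cos φ]

/-- `J_O(η)⁻¹ = diag{I₃, J_θ(η)⁻¹}`. -/
noncomputable def JOinv (φ θ : ℝ) : Matrix (Fin 3 ⊕ Fin 3) (Fin 3 ⊕ Fin 3) ℝ :=
  Matrix.fromBlocks (1 : Matrix (Fin 3) (Fin 3) ℝ) 0 0 (eulerRateInv φ θ)

theorem ContinuousLinearMap.opNorm_eq_sqrt_of_norm_sq {E F : Type*} [NormedAddCommGroup E]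
    [NormedSpace ℝ E] [SeminormedAddCommGroup F] [NormedSpace ℝ F] (T : E →L[ℝ] F) {c : ℝ}
    (hc : 0 ≤ c) (hle : ∀ v, ‖T v‖ ^ 2 ≤ c * ‖v‖ ^ 2)
    (hattain : ∃ v, v ≠ 0 ∧ ‖T v‖ ^ 2 = c * ‖v‖ ^ 2) : ‖T‖ = √c := by
  have hsqrt : ∀ v : E, √(c * ‖v‖ ^ 2) = √c * ‖v‖ := fun v => by
    rw [sqrt_mul hc, sqrt_sq (norm_nonneg v)]
  refine T.opNorm_eq_of_bounds (sqrt_nonneg c) (fun v => ?_) fun N _ hN => ?_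
  · rw [← hsqrt, ← sqrt_sq (norm_nonneg (T v))]
    exact sqrt_le_sqrt (hle v)
  · obtain ⟨v, hv, heq⟩ := hattain
    have hTv : ‖T v‖ = √c * ‖v‖ := by rw [← hsqrt, ← heq, sqrt_sq (norm_nonneg _)]
    exact le_of_mul_le_mul_right (hTv ▸ hN v) (norm_pos_iff.mpr hv)

theorem Matrix.norm_toEuclideanLin_sq {m n : Type*} [Fintype m] [Fintype n] [DecidableEq n]
    (A : Matrix m n ℝ) (v : EuclideanSpace ℝ n) :
    ‖toEuclideanLin A v‖ ^ 2 = v.ofLp ⬝ᵥ (Aᵀ * A) *ᵥ v.ofLp := by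
  rw [EuclideanSpace.real_norm_sq_eq, ← mulVec_mulVec, dotProduct_mulVec, vecMul_transpose]
  simp [dotProduct, sq]

theorem EuclideanSpace.sq_add_sq_le_norm_sq {n : Type*} [Fintype n] (v : EuclideanSpace ℝ n)
    {i j : n} (hij : i ≠ j) : v i ^ 2 + v j ^ 2 ≤ ‖v‖ ^ 2 := by
  classical
  rw [EuclideanSpace.real_norm_sq_eq, ← Finset.sum_pair (f := fun k => v k ^ 2) hij]
  exact Finset.sum_le_sum_of_subset_of_nonneg (Finset.subset_univ _)
    fun k _ _ => sq_nonneg (v k)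

theorem eulerRateInv_transpose_mul_self (φ θ : ℝ) :
    (eulerRateInv φ θ)ᵀ * eulerRateInv φ θ = !![1, 0, -sin θ; 0, 1, 0; -sin θ, 0, 1] := by
  have hθ := sin_sq_add_cos_sq θ
  have hφ := sin_sq_add_cos_sq φ
  ext i j
  fin_cases i <;> fin_cases j <;> simp [eulerRateInv, Matrix.mul_apply, Fin.sum_univ_three]
  · linear_combination hφ
  · ring
  · ring
  · linear_combination (cos θ) ^ 2 * hφ + hθ

theorem norm_toEuclideanLin_JOinv_sq (φ θ : ℝ) (v : EuclideanSpace ℝ (Fin 3 ⊕ Fin 3)) :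
    ‖toEuclideanLin (JOinv φ θ) v‖ ^ 2 = ‖v‖ ^ 2 - 2 * sin θ * v (.inr 0) * v (.inr 2) := by
  rw [Matrix.norm_toEuclideanLin_sq, JOinv, fromBlocks_transpose, fromBlocks_multiply,
    eulerRateInv_transpose_mul_self, EuclideanSpace.real_norm_sq_eq]
  simp only [transpose_one, transpose_zero, mul_one, mul_zero, zero_mul, add_zero, zero_add,
    dotProduct, mulVec, fromBlocks, of_apply, Fintype.sum_sum_type, Fin.sum_univ_three,
    Sum.elim_inl, Sum.elim_inr, Matrix.zero_apply, one_apply_eq, one_apply_ne, ne_eq,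
    Fin.reduceEq, not_false_eq_true, cons_val', cons_val_zero, cons_val_fin_one, cons_val_one,
    cons_val]
  ring

theorem specNorm_JOinv (φ θ : ℝ) : specNorm (JOinv φ θ) = √(1 + |sin θ|) := by
  have hpair := fun v : EuclideanSpace ℝ (Fin 3 ⊕ Fin 3) =>
    v.sq_add_sq_le_norm_sq (i := .inr 0) (j := .inr 2) (by decide)
  refine ContinuousLinearMap.opNorm_eq_sqrt_of_norm_sq _ (by positivity) (fun v => ?_) ?_
  · rw [LinearMap.coe_toContinuousLinearMap', norm_toEuclideanLin_JOinv_sq]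
    have hcross : -(2 * sin θ * v (.inr 0) * v (.inr 2))
        ≤ |sin θ| * (v (.inr 0) ^ 2 + v (.inr 2) ^ 2) := calc
      _ ≤ |2 * sin θ * v (.inr 0) * v (.inr 2)| := neg_le_abs _
      _ = |sin θ| * (2 * |v (.inr 0)| * |v (.inr 2)|) := by simp only [abs_mul, abs_two]; ring
      _ ≤ |sin θ| * (v (.inr 0) ^ 2 + v (.inr 2) ^ 2) := by
        gcongr
        simpa only [sq_abs] using two_mul_le_add_sq |v (.inr 0)| |v (.inr 2)|
    nlinarith [mul_le_mul_of_nonneg_left (hpair v) (abs_nonneg (sin θ))]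
  · obtain ⟨ε, hε, hεs⟩ : ∃ ε : ℝ, ε ^ 2 = 1 ∧ ε * sin θ = |sin θ| := by
      rcases abs_cases (sin θ) with ⟨h, -⟩ | ⟨h, -⟩
      · exact ⟨1, by norm_num, by rw [h, one_mul]⟩
      · exact ⟨-1, by norm_num, by rw [h, neg_one_mul]⟩
    let v : EuclideanSpace ℝ (Fin 3 ⊕ Fin 3) := WithLp.toLp 2 (Sum.elim 0 ![1, 0, -ε])
    have hv : ‖v‖ ^ 2 = 2 := by
      simp [v, EuclideanSpace.real_norm_sq_eq, Fintype.sum_sum_type, Fin.sum_univ_three, hε,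
        one_add_one_eq_two]
    refine ⟨v, fun h => by simp [h] at hv, ?_⟩
    rw [LinearMap.coe_toContinuousLinearMap', norm_toEuclideanLin_JOinv_sq, hv]
    simp only [v, Sum.elim_inr, cons_val_zero, cons_val]
    linear_combination 2 * hεs

theorem stmt3_general (φ θ : ℝ) :
    specNorm (JOinv φ θ) = Real.sqrt (1 + |Real.sin θ|) ∧
      specNorm (JOinv φ θ) ≤ Real.sqrt 2 := by
  refine ⟨specNorm_JOinv φ θ, specNorm_JOinv φ θ ▸ sqrt_le_sqrt ?_⟩
  linarith [abs_sin_le_one θ]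

/-- For the 6×6 block matrix `J_O(η) = diag{I₃, J_θ(η)}` of the ZYX Euler-angle
representation Jacobian, the spectral norm of the inverse satisfies
`‖J_O(η)⁻¹‖ = √(1 + |sin θ|) ≤ √2` for all pitch angles `θ ∈ (−π/2, π/2)`. -/
theorem stmt3 (φ θ ψ : ℝ) (hθ : θ ∈ Set.Ioo (-(π / 2)) (π / 2)) :
    specNorm (JOinv φ θ) = Real.sqrt (1 + |Real.sin θ|) ∧
      specNorm (JOinv φ θ) ≤ Real.sqrt 2 :=
  stmt3_general φ θ
end

section
/- Under the same setup, the spectral norm of J_O(η) satisfies ‖J_O(η)‖ = √((|sin θ| + 1)/(1 − sin²θ)) for all pitch angles θ ∈ (−π/2, π/2); in particular ‖J_O(η)‖ → ∞ as θ → ±π/2. -/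
/-!
Rotating the last two coordinates by the roll angle, `(z₂, z₃) ↦ (w, u)` with
`u = sin φ z₂ + cos φ z₃`, turns `J_θ` into `[[1, 0, tan θ], [0, 1, 0], [0, 0, 1 / cos θ]]`, so
everything reduces to the `2 × 2` block `B = [[1, tan θ], [0, 1 / cos θ]]` acting on `(z₁, u)`.
Since `cos² θ ‖B(z, u)‖² = (cos θ z + sin θ u)² + u²`, the largest eigenvalue of `BᵀB` is
`(1 + |sin θ|) / cos² θ ≥ 1`: the upper bound is a sum-of-squares certificate and equality holds at
`(z, u) = (cos θ · sign (sin θ), 1 + |sin θ|)`. As `θ → ±π/2` the numerator tends to `2` while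
`cos² θ → 0⁺`.
-/
open Matrix Real

/-- The Euler-angle rate matrix `J_θ(η)` mapping `ω` to `η̇` for the ZYX
(roll-pitch-yaw) convention, with roll `φ` and pitch `θ`. -/
noncomputable def eulerRate (φ θ : ℝ) : Matrix (Fin 3) (Fin 3) ℝ :=
  !![1, Real.sin φ * Real.tan θ, Real.cos φ * Real.tan θ;
     0, Real.cos φ, -Real.sin φ;
     0, Real.sin φ / Real.cos θ, Real.cos φ / Real.cos θ]

/-- The object representation Jacobian `J_O(η) = diag{I₃, J_θ(η)}`. -/
noncomputable def JO (φ θ : ℝ) : Matrix (Fin 3 ⊕ Fin 3) (Fin 3 ⊕ Fin 3) ℝ :=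
  Matrix.fromBlocks (1 : Matrix (Fin 3) (Fin 3) ℝ) 0 0 (eulerRate φ θ)

open Filter Topology Sum

lemma specNorm_eq_sqrt_of_forall_le_of_eq {m n : Type*} [Fintype m] [Fintype n] [DecidableEq n]
    (A : Matrix m n ℝ) {r : ℝ} (hle : ∀ x, ‖toEuclideanLin A x‖ ^ 2 ≤ r * ‖x‖ ^ 2)
    {v : EuclideanSpace ℝ n} (hv : v ≠ 0) (heq : ‖toEuclideanLin A v‖ ^ 2 = r * ‖v‖ ^ 2) :
    specNorm A = √r := by
  have hv' : 0 < ‖v‖ := norm_pos_iff.mpr hv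
  have hr : 0 ≤ r := by
    have : 0 ≤ r * ‖v‖ ^ 2 := heq ▸ sq_nonneg _
    exact nonneg_of_mul_nonneg_left this (by positivity)
  have hsqrt (x : EuclideanSpace ℝ n) : √r * ‖x‖ = √(r * ‖x‖ ^ 2) := by
    rw [Real.sqrt_mul hr, Real.sqrt_sq (norm_nonneg x)]
  apply le_antisymm
  · refine ContinuousLinearMap.opNorm_le_bound _ (Real.sqrt_nonneg r) fun x => ?_
    rw [LinearMap.coe_toContinuousLinearMap', hsqrt]
    exact Real.le_sqrt_of_sq_le (hle x)
  · refine le_of_mul_le_mul_right ?_ hv'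
    calc √r * ‖v‖ = ‖toEuclideanLin A v‖ := by
          rw [hsqrt, ← heq, Real.sqrt_sq (norm_nonneg _)]
      _ ≤ specNorm A * ‖v‖ :=
          (LinearMap.toContinuousLinearMap (toEuclideanLin A)).le_opNorm v

/-- `(|s| + |s|²)(|s| − |s|²) = s² c²` is what makes the gap a perfect square. -/
lemma pitch_quadratic_certificate (s c z u : ℝ) (hsc : s ^ 2 + c ^ 2 = 1) :
    (|s| + |s| ^ 2) * ((1 + |s|) * (z ^ 2 + u ^ 2) - ((c * z + s * u) ^ 2 + u ^ 2))
      = ((|s| + |s| ^ 2) * z - c * s * u) ^ 2 := by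
  linear_combination (-(|s| + |s| ^ 2) * z ^ 2 + (|s| + 1 - s ^ 2) * u ^ 2) * sq_abs s
    + (-(|s| + |s| ^ 2) * z ^ 2 - s ^ 2 * u ^ 2) * hsc

lemma pitch_quadratic_le (s c z u : ℝ) (hsc : s ^ 2 + c ^ 2 = 1) :
    (c * z + s * u) ^ 2 + u ^ 2 ≤ (1 + |s|) * (z ^ 2 + u ^ 2) := by
  rcases (abs_nonneg s).eq_or_lt with hs | hs
  · obtain rfl : s = 0 := abs_eq_zero.mp hs.symm
    nlinarith
  · have := pitch_quadratic_certificate s c z u hsc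
    nlinarith [sq_nonneg ((|s| + |s| ^ 2) * z - c * s * u)]

lemma pitch_quadratic_eq (s c : ℝ) (hsc : s ^ 2 + c ^ 2 = 1) :
    (c * (c * SignType.sign s) + s * (1 + |s|)) ^ 2 + (1 + |s|) ^ 2
      = (1 + |s|) * ((c * SignType.sign s) ^ 2 + (1 + |s|) ^ 2) := by
  rcases (abs_nonneg s).eq_or_lt with hs | hs
  · obtain rfl : s = 0 := abs_eq_zero.mp hs.symm
    simp
  · have h := pitch_quadratic_certificate s c (c * SignType.sign s) (1 + |s|) hsc
    have hσ : (|s| + |s| ^ 2) * (c * SignType.sign s) - c * s * (1 + |s|) = 0 := by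
      linear_combination c * (1 + |s|) * abs_mul_sign s
    rw [hσ, zero_pow two_ne_zero, mul_eq_zero] at h
    rcases h with h | h
    · exact absurd h (by positivity)
    · linarith

lemma EuclideanSpace.norm_sq_eq_fin_three_sum (x : EuclideanSpace ℝ (Fin 3 ⊕ Fin 3)) :
    ‖x‖ ^ 2 = x (inl 0) ^ 2 + x (inl 1) ^ 2 + x (inl 2) ^ 2
      + x (inr 0) ^ 2 + x (inr 1) ^ 2 + x (inr 2) ^ 2 := by
  simp only [EuclideanSpace.norm_sq_eq, Fintype.sum_sum_type, Fin.sum_univ_three,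
    Real.norm_eq_abs, sq_abs]
  ring

lemma toEuclideanLin_JO_apply (φ θ : ℝ) (x : EuclideanSpace ℝ (Fin 3 ⊕ Fin 3)) :
    toEuclideanLin (JO φ θ) x = WithLp.toLp 2 (Sum.elim (fun i => x (inl i))
      ![x (inr 0) + tan θ * (sin φ * x (inr 1) + cos φ * x (inr 2)),
        cos φ * x (inr 1) - sin φ * x (inr 2),
        (sin φ * x (inr 1) + cos φ * x (inr 2)) / cos θ]) := by
  ext (i | i) <;> fin_cases i <;>
    simp only [JO, eulerRate, toLpLin_apply, mulVec, dotProduct, Fintype.sum_sum_type,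
      Fin.sum_univ_three, fromBlocks_apply₁₁, fromBlocks_apply₁₂, fromBlocks_apply₂₁,
      fromBlocks_apply₂₂, one_apply, Matrix.zero_apply, of_apply, cons_val', cons_val_fin_one,
      cons_val_zero, cons_val_one, cons_val, elim_inl, elim_inr, Fin.isValue, Fin.reduceFinMk,
      Fin.zero_eta, Fin.mk_one, ite_mul, one_mul, zero_mul, Finset.sum_ite_eq, Finset.mem_univ,
      ↓reduceIte, Finset.sum_const_zero] <;> ring

lemma norm_sq_toEuclideanLin_JO_apply (φ θ : ℝ) (x : EuclideanSpace ℝ (Fin 3 ⊕ Fin 3)) :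
    ‖toEuclideanLin (JO φ θ) x‖ ^ 2 = x (inl 0) ^ 2 + x (inl 1) ^ 2 + x (inl 2) ^ 2
      + (x (inr 0) + tan θ * (sin φ * x (inr 1) + cos φ * x (inr 2))) ^ 2
      + (cos φ * x (inr 1) - sin φ * x (inr 2)) ^ 2
      + ((sin φ * x (inr 1) + cos φ * x (inr 2)) / cos θ) ^ 2 := by
  rw [EuclideanSpace.norm_sq_eq_fin_three_sum, toEuclideanLin_JO_apply]
  simp

lemma norm_sq_toEuclideanLin_JO_apply_le {φ θ : ℝ} (hθ : cos θ ≠ 0)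
    (x : EuclideanSpace ℝ (Fin 3 ⊕ Fin 3)) :
    ‖toEuclideanLin (JO φ θ) x‖ ^ 2 ≤ (|sin θ| + 1) / (1 - sin θ ^ 2) * ‖x‖ ^ 2 := by
  rw [norm_sq_toEuclideanLin_JO_apply, EuclideanSpace.norm_sq_eq_fin_three_sum, ← cos_sq',
    div_mul_eq_mul_div, le_div_iff₀ (by positivity), tan_eq_sin_div_cos]
  set u := sin φ * x (inr 1) + cos φ * x (inr 2)
  set w := cos φ * x (inr 1) - sin φ * x (inr 2)
  have hrot : x (inr 1) ^ 2 + x (inr 2) ^ 2 = u ^ 2 + w ^ 2 := by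
    linear_combination -(x (inr 1) ^ 2 + x (inr 2) ^ 2) * sin_sq_add_cos_sq φ
  have hexpand : (x (inl 0) ^ 2 + x (inl 1) ^ 2 + x (inl 2) ^ 2
      + (x (inr 0) + sin θ / cos θ * u) ^ 2 + w ^ 2 + (u / cos θ) ^ 2) * cos θ ^ 2
      = cos θ ^ 2 * (x (inl 0) ^ 2 + x (inl 1) ^ 2 + x (inl 2) ^ 2 + w ^ 2)
        + ((cos θ * x (inr 0) + sin θ * u) ^ 2 + u ^ 2) := by
    field_simp
    ring
  have hcos : cos θ ^ 2 ≤ 1 + |sin θ| := by nlinarith [sin_sq_add_cos_sq θ, abs_nonneg (sin θ)]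
  rw [hexpand]
  calc _ ≤ (1 + |sin θ|) * (x (inl 0) ^ 2 + x (inl 1) ^ 2 + x (inl 2) ^ 2 + w ^ 2)
        + (1 + |sin θ|) * (x (inr 0) ^ 2 + u ^ 2) := by
        gcongr
        exact pitch_quadratic_le (sin θ) (cos θ) (x (inr 0)) u (sin_sq_add_cos_sq θ)
    _ = _ := by linear_combination -(1 + |sin θ|) * hrot

lemma specNorm_JO {φ θ : ℝ} (hθ : cos θ ≠ 0) :
    specNorm (JO φ θ) = √((|sin θ| + 1) / (1 - sin θ ^ 2)) := by
  set a := |sin θ|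
  set v : EuclideanSpace ℝ (Fin 3 ⊕ Fin 3) := WithLp.toLp 2
    (Sum.elim 0 ![cos θ * SignType.sign (sin θ), (1 + a) * sin φ, (1 + a) * cos φ])
  have hu : sin φ * v (inr 1) + cos φ * v (inr 2) = 1 + a := by
    simp only [v, elim_inr, cons_val_one, cons_val_zero, cons_val]
    linear_combination (1 + a) * sin_sq_add_cos_sq φ
  have hw : cos φ * v (inr 1) - sin φ * v (inr 2) = 0 := by
    simp only [v, elim_inr, cons_val_one, cons_val_zero, cons_val]
    ring
  refine specNorm_eq_sqrt_of_forall_le_of_eq _ (norm_sq_toEuclideanLin_JO_apply_le hθ) (v := v) ?_ ?_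
  · intro hv
    rw [hv] at hu
    simp only [WithLp.ofLp_zero, Pi.zero_apply, mul_zero, add_zero] at hu
    linarith [abs_nonneg (sin θ)]
  · rw [norm_sq_toEuclideanLin_JO_apply, EuclideanSpace.norm_sq_eq_fin_three_sum, hu, hw]
    simp only [v, elim_inl, elim_inr, Pi.zero_apply, cons_val_zero, cons_val_one, cons_val,
      ne_eq, OfNat.ofNat_ne_zero, not_false_eq_true, zero_pow, zero_add, add_zero]
    rw [tan_eq_sin_div_cos, ← cos_sq']
    field_simp
    linear_combination pitch_quadratic_eq (sin θ) (cos θ) (sin_sq_add_cos_sq θ)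
      - (1 + a) ^ 3 * sin_sq_add_cos_sq φ

lemma tendsto_sqrt_div_one_sub_sin_sq_atTop {x₀ : ℝ} {S : Set ℝ} (hx₀ : cos x₀ = 0)
    (hS : ∀ᶠ θ in 𝓝[S] x₀, cos θ ≠ 0) :
    Tendsto (fun θ : ℝ => √((|sin θ| + 1) / (1 - sin θ ^ 2))) (𝓝[S] x₀) atTop := by
  have hsin : |sin x₀| = 1 := by
    rw [← pow_eq_one_iff_of_nonneg (abs_nonneg _) two_ne_zero, sq_abs, sin_sq, hx₀]
    norm_num
  have hnum : Tendsto (fun θ => |sin θ| + 1) (𝓝[S] x₀) (𝓝 2) := by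
    refine (Continuous.tendsto' (by fun_prop) x₀ 2 ?_).mono_left nhdsWithin_le_nhds
    rw [hsin, one_add_one_eq_two]
  have hden : Tendsto (fun θ => cos θ ^ 2) (𝓝[S] x₀) (𝓝[>] 0) := by
    refine tendsto_nhdsWithin_iff.mpr ⟨?_, hS.mono fun θ hθ => pow_two_pos_of_ne_zero hθ⟩
    refine (Continuous.tendsto' (by fun_prop) x₀ 0 ?_).mono_left nhdsWithin_le_nhds
    rw [hx₀, zero_pow two_ne_zero]
  simp_rw [← cos_sq', div_eq_mul_inv]
  exact tendsto_sqrt_atTop.comp (hnum.pos_mul_atTop two_pos (tendsto_inv_nhdsGT_zero.comp hden))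

/-- The spectral norm of `J_O(η) = diag{I₃, J_θ(η)}` satisfies
`‖J_O(η)‖ = √((|sin θ| + 1)/(1 − sin²θ))` for all pitch angles `θ ∈ (−π/2, π/2)`;
in particular `‖J_O(η)‖ → ∞` as `θ → ±π/2`. -/
theorem stmt4 :
    (∀ (φ θ ψ : ℝ), θ ∈ Set.Ioo (-(π / 2)) (π / 2) →
      specNorm (JO φ θ) = Real.sqrt ((|Real.sin θ| + 1) / (1 - Real.sin θ ^ 2))) ∧
    Filter.Tendsto (fun θ : ℝ => Real.sqrt ((|Real.sin θ| + 1) / (1 - Real.sin θ ^ 2)))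
      (nhdsWithin (π / 2) (Set.Iio (π / 2))) Filter.atTop ∧
    Filter.Tendsto (fun θ : ℝ => Real.sqrt ((|Real.sin θ| + 1) / (1 - Real.sin θ ^ 2)))
      (nhdsWithin (-(π / 2)) (Set.Ioi (-(π / 2)))) Filter.atTop := by
  have hcos {θ : ℝ} (hθ : θ ∈ Set.Ioo (-(π / 2)) (π / 2)) : cos θ ≠ 0 :=
    (cos_pos_of_mem_Ioo hθ).ne'
  refine ⟨fun φ θ _ hθ => specNorm_JO (hcos hθ), ?_, ?_⟩
  · refine tendsto_sqrt_div_one_sub_sin_sq_atTop cos_pi_div_two ?_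
    filter_upwards [Ioo_mem_nhdsLT (neg_lt_self pi_div_two_pos)] with θ hθ using hcos hθ
  · refine tendsto_sqrt_div_one_sub_sin_sq_atTop (by simp) ?_
    filter_upwards [Ioo_mem_nhdsGT (neg_lt_self pi_div_two_pos)] with θ hθ using hcos hθ
end

section
/- Suppose for each i, the matrix Ṁᵢ − 2Cᵢ is skew-symmetric and Ṁ_O − 2C_O is skew-symmetric. Define M̃ = M_O + G^T M G and C̃ = C_O + G^T C G + G^T M Ġ, where M = diag{Mᵢ}, C = diag{Cᵢ}, and G = G(t) is a differentiable matrix-valued function. Then the matrix d/dt(M̃) − 2C̃ is skew-symmetric. -/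
open Matrix

/-!
Differentiating `M̃ = M_O + Gᵀ M G` by the product rule gives
`d/dt M̃ - 2 C̃ = (Ṁ_O - 2 C_O) + Gᵀ (Ṁ - 2 C) G + (Ġᵀ M G - Gᵀ M Ġ)`.
The first two terms are skew-symmetric by hypothesis (a congruence `Gᵀ K G` and a block-diagonal
matrix of skew blocks stay skew), and the last one is `X - Xᵀ` for `X = Ġᵀ M G` because `M` is
symmetric.
-/

namespace Matrix

variable {m n o R : Type*}

def IsSkewSymm [Add R] [Zero R] (A : Matrix n n R) : Prop :=
  A + Aᵀ = 0

theorem IsSkewSymm.add [AddCommMonoid R] {A B : Matrix n n R} (hA : A.IsSkewSymm)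
    (hB : B.IsSkewSymm) : (A + B).IsSkewSymm := by
  rw [IsSkewSymm, transpose_add, add_add_add_comm, hA, hB, add_zero]

theorem isSkewSymm_sub_transpose [AddCommGroup R] (X : Matrix n n R) :
    (X - Xᵀ).IsSkewSymm := by
  rw [IsSkewSymm, transpose_sub, transpose_transpose, sub_add_sub_cancel, sub_self]

theorem IsSkewSymm.transpose_mul_mul [Fintype n] [CommRing R] {K : Matrix n n R}
    (hK : K.IsSkewSymm) (G : Matrix n m R) : (Gᵀ * K * G).IsSkewSymm := by
  have hfactor : Gᵀ * K * G + (Gᵀ * K * G)ᵀ = Gᵀ * (K + Kᵀ) * G := by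
    simp only [transpose_mul, transpose_transpose, Matrix.mul_add, Matrix.add_mul,
      Matrix.mul_assoc]
  rw [IsSkewSymm, hfactor, hK, Matrix.mul_zero, Matrix.zero_mul]

theorem IsSkewSymm.blockDiagonal [DecidableEq n] [DecidableEq o] [AddCommMonoid R]
    {K : o → Matrix n n R} (hK : ∀ k, (K k).IsSkewSymm) : (blockDiagonal K).IsSkewSymm := by
  rw [IsSkewSymm, blockDiagonal_transpose, ← blockDiagonal_add,
    show K + (fun k => (K k)ᵀ) = 0 from funext hK, blockDiagonal_zero]

end Matrix

def HasEntrywiseDerivAt {m n : Type*} (A : ℝ → Matrix m n ℝ) (A' : Matrix m n ℝ) (t : ℝ) :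
    Prop :=
  ∀ i j, HasDerivAt (fun s => A s i j) (A' i j) t

namespace HasEntrywiseDerivAt

variable {l m n o : Type*} {t : ℝ}

theorem unique {A : ℝ → Matrix m n ℝ} {A₁' A₂' : Matrix m n ℝ}
    (h₁ : HasEntrywiseDerivAt A A₁' t) (h₂ : HasEntrywiseDerivAt A A₂' t) : A₁' = A₂' :=
  Matrix.ext fun i j => (h₁ i j).unique (h₂ i j)

theorem add {A B : ℝ → Matrix m n ℝ} {A' B' : Matrix m n ℝ}
    (hA : HasEntrywiseDerivAt A A' t) (hB : HasEntrywiseDerivAt B B' t) :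
    HasEntrywiseDerivAt (fun s => A s + B s) (A' + B') t :=
  fun i j => (hA i j).add (hB i j)

theorem transpose {A : ℝ → Matrix m n ℝ} {A' : Matrix m n ℝ}
    (hA : HasEntrywiseDerivAt A A' t) : HasEntrywiseDerivAt (fun s => (A s)ᵀ) A'ᵀ t :=
  fun i j => hA j i

theorem mul [Fintype m] {A : ℝ → Matrix l m ℝ} {B : ℝ → Matrix m n ℝ}
    {A' : Matrix l m ℝ} {B' : Matrix m n ℝ}
    (hA : HasEntrywiseDerivAt A A' t) (hB : HasEntrywiseDerivAt B B' t) :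
    HasEntrywiseDerivAt (fun s => A s * B s) (A' * B t + A t * B') t := by
  intro i j
  simp only [Matrix.add_apply, mul_apply, ← Finset.sum_add_distrib]
  exact HasDerivAt.fun_sum fun k _ => (hA i k).fun_mul (hB k j)

theorem blockDiagonal [DecidableEq o] {A : o → ℝ → Matrix m n ℝ} {A' : o → Matrix m n ℝ}
    (hA : ∀ k, HasEntrywiseDerivAt (A k) (A' k) t) :
    HasEntrywiseDerivAt (fun s => Matrix.blockDiagonal fun k => A k s)
      (Matrix.blockDiagonal A') t := by
  rintro ⟨i, k⟩ ⟨j, k'⟩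
  by_cases h : k = k'
  · subst h
    simpa only [blockDiagonal_apply_eq] using hA k i j
  · simpa only [blockDiagonal_apply_ne _ _ _ h] using hasDerivAt_const t (0 : ℝ)

end HasEntrywiseDerivAt

theorem stmt7_general (N : ℕ)
    (Mi Ci Mi' : Fin N → ℝ → Matrix (Fin 6) (Fin 6) ℝ)
    (MO CO MO' : ℝ → Matrix (Fin 6) (Fin 6) ℝ)
    (G G' : ℝ → Matrix (Fin 6 × Fin N) (Fin 6) ℝ)
    (t₀ : ℝ)
    (hMisymm : ∀ k t, (Mi k t).IsSymm)
    (hMideriv : ∀ k t i j, HasDerivAt (fun s => Mi k s i j) (Mi' k t i j) t)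
    (hMOderiv : ∀ t i j, HasDerivAt (fun s => MO s i j) (MO' t i j) t)
    (hGderiv : ∀ t i j, HasDerivAt (fun s => G s i j) (G' t i j) t)
    (hskewi : ∀ k t, (Mi' k t - (2 : ℝ) • Ci k t) + (Mi' k t - (2 : ℝ) • Ci k t)ᵀ = 0)
    (hskewO : ∀ t, (MO' t - (2 : ℝ) • CO t) + (MO' t - (2 : ℝ) • CO t)ᵀ = 0)
    (tM' : Matrix (Fin 6) (Fin 6) ℝ)
    (htM' : ∀ i j, HasDerivAt
      (fun s => (MO s + (G s)ᵀ * Matrix.blockDiagonal (fun k => Mi k s) * G s) i j)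
      (tM' i j) t₀) :
    (tM' - (2 : ℝ) • (CO t₀ + (G t₀)ᵀ * Matrix.blockDiagonal (fun k => Ci k t₀) * G t₀
        + (G t₀)ᵀ * Matrix.blockDiagonal (fun k => Mi k t₀) * G' t₀)) +
      (tM' - (2 : ℝ) • (CO t₀ + (G t₀)ᵀ * Matrix.blockDiagonal (fun k => Ci k t₀) * G t₀
        + (G t₀)ᵀ * Matrix.blockDiagonal (fun k => Mi k t₀) * G' t₀))ᵀ = 0 := by
  set M := Matrix.blockDiagonal fun k => Mi k t₀
  set M' := Matrix.blockDiagonal fun k => Mi' k t₀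
  set C := Matrix.blockDiagonal fun k => Ci k t₀
  have hM : Mᵀ = M := by
    simp only [M, blockDiagonal_transpose, fun k => (hMisymm k t₀).eq]
  have hderiv : HasEntrywiseDerivAt
      (fun s => MO s + (G s)ᵀ * Matrix.blockDiagonal (fun k => Mi k s) * G s)
      (MO' t₀ + (((G' t₀)ᵀ * M + (G t₀)ᵀ * M') * G t₀ + (G t₀)ᵀ * M * G' t₀)) t₀ := by
    have hG : HasEntrywiseDerivAt G (G' t₀) t₀ := hGderiv t₀
    have hMO : HasEntrywiseDerivAt MO (MO' t₀) t₀ := hMOderiv t₀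
    exact hMO.add <| (hG.transpose.mul <|
      HasEntrywiseDerivAt.blockDiagonal fun k => hMideriv k t₀).mul hG
  have hsplit : tM' - (2 : ℝ) • (CO t₀ + (G t₀)ᵀ * C * G t₀ + (G t₀)ᵀ * M * G' t₀)
      = (MO' t₀ - (2 : ℝ) • CO t₀) + (G t₀)ᵀ * (M' - (2 : ℝ) • C) * G t₀
        + ((G' t₀)ᵀ * M * G t₀ - ((G' t₀)ᵀ * M * G t₀)ᵀ) := by
    rw [HasEntrywiseDerivAt.unique htM' hderiv, transpose_mul, transpose_mul, transpose_transpose,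
      hM]
    simp only [Matrix.mul_sub, Matrix.sub_mul, Matrix.add_mul, Matrix.mul_smul,
      Matrix.smul_mul, Matrix.mul_assoc]
    module
  rw [hsplit]
  have hskewM : (M' - (2 : ℝ) • C).IsSkewSymm := by
    rw [← blockDiagonal_smul, ← blockDiagonal_sub]
    exact IsSkewSymm.blockDiagonal (hskewi · t₀)
  exact (IsSkewSymm.add (hskewO t₀) (hskewM.transpose_mul_mul _)).add
    (isSkewSymm_sub_transpose _)

/-- If each `Ṁᵢ − 2Cᵢ` and `Ṁ_O − 2C_O` is skew-symmetric, then with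
`M̃ = M_O + Gᵀ M G` and `C̃ = C_O + Gᵀ C G + Gᵀ M Ġ` (where `M = diag{Mᵢ}`,
`C = diag{Cᵢ}` and `G(t)` differentiable), the matrix `d/dt(M̃) − 2C̃` is
skew-symmetric. -/
theorem stmt7 (N : ℕ)
    (Mi Ci Mi' : Fin N → ℝ → Matrix (Fin 6) (Fin 6) ℝ)
    (MO CO MO' : ℝ → Matrix (Fin 6) (Fin 6) ℝ)
    (G G' : ℝ → Matrix (Fin 6 × Fin N) (Fin 6) ℝ)
    (t₀ : ℝ)
    (hMisymm : ∀ k t, (Mi k t).IsSymm)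
    (hMOsymm : ∀ t, (MO t).IsSymm)
    (hMideriv : ∀ k t i j, HasDerivAt (fun s => Mi k s i j) (Mi' k t i j) t)
    (hMOderiv : ∀ t i j, HasDerivAt (fun s => MO s i j) (MO' t i j) t)
    (hGderiv : ∀ t i j, HasDerivAt (fun s => G s i j) (G' t i j) t)
    (hskewi : ∀ k t, (Mi' k t - (2 : ℝ) • Ci k t) + (Mi' k t - (2 : ℝ) • Ci k t)ᵀ = 0)
    (hskewO : ∀ t, (MO' t - (2 : ℝ) • CO t) + (MO' t - (2 : ℝ) • CO t)ᵀ = 0)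
    (tM' : Matrix (Fin 6) (Fin 6) ℝ)
    (htM' : ∀ i j, HasDerivAt
      (fun s => (MO s + (G s)ᵀ * Matrix.blockDiagonal (fun k => Mi k s) * G s) i j)
      (tM' i j) t₀) :
    (tM' - (2 : ℝ) • (CO t₀ + (G t₀)ᵀ * Matrix.blockDiagonal (fun k => Ci k t₀) * G t₀
        + (G t₀)ᵀ * Matrix.blockDiagonal (fun k => Mi k t₀) * G' t₀)) +
      (tM' - (2 : ℝ) • (CO t₀ + (G t₀)ᵀ * Matrix.blockDiagonal (fun k => Ci k t₀) * G t₀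
        + (G t₀)ᵀ * Matrix.blockDiagonal (fun k => Mi k t₀) * G' t₀))ᵀ = 0 :=
  stmt7_general N Mi Ci Mi' MO CO MO' G G' t₀ hMisymm hMideriv hMOderiv hGderiv hskewi hskewO tM'
    htM'
end

section
/- Consider the scalar closed-loop quaternion dynamics ė_φ = (k_ζ/2)‖e_ε‖² + ½ e_ε^T w(t) restricted to the unit sphere e_φ² + ‖e_ε‖² = 1, with k_ζ > 0. If w ≡ 0, then the equilibrium (e_φ, e_ε) = (−1, 0) is unstable: any initial condition with e_φ(0) > −1 satisfies e_φ(t) nondecreasing and e_φ(t) → 1 as t → ∞. -/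
/-!
On `[-1, 1]` the vector field `(k/2)(1 - x²)` is nonnegative, so the trajectory is monotone.
If it stayed below some level `a < 1`, then along it `1 - x² = (1 - x)(1 + x)` would be at least
`(1 - a)(1 + e(0)) > 0`, so the trajectory would grow at least linearly, contradicting `e ≤ 1`.
-/

open Set Filter

section DerivLowerBound

variable {f f' : ℝ → ℝ} {C : ℝ}

lemma mul_sub_le_sub_of_hasDerivAt_Ici {a : ℝ} (hf : ∀ t, a ≤ t → HasDerivAt f (f' t) t)
    (hC : ∀ t, a ≤ t → C ≤ f' t) {x y : ℝ} (hx : a ≤ x) (hxy : x ≤ y) :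
    C * (y - x) ≤ f y - f x := by
  refine (convex_Ici a).mul_sub_le_image_sub_of_le_deriv
    (fun t ht => (hf t ht).continuousAt.continuousWithinAt)
    (fun t ht => (hf t (interior_subset ht)).differentiableAt.differentiableWithinAt)
    (fun t ht => ?_) x hx y (hx.trans hxy) hxy
  rw [(hf t (interior_subset ht)).deriv]
  exact hC t (interior_subset ht)

lemma monotoneOn_Ici_of_hasDerivAt_nonneg {a : ℝ} (hf : ∀ t, a ≤ t → HasDerivAt f (f' t) t)
    (hf' : ∀ t, a ≤ t → 0 ≤ f' t) : MonotoneOn f (Ici a) := fun x hx y _ hxy => by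
  simpa using mul_sub_le_sub_of_hasDerivAt_Ici hf hf' hx hxy

lemma nonpos_of_le_hasDerivAt_of_bddAbove {B : ℝ} (hf : ∀ t, 0 ≤ t → HasDerivAt f (f' t) t)
    (hC : ∀ t, 0 ≤ t → C ≤ f' t) (hB : ∀ t, 0 ≤ t → f t ≤ B) : C ≤ 0 := by
  by_contra! hCpos
  set T := (B - f 0 + 1) / C
  have hT : 0 ≤ T := div_nonneg (by linarith [hB 0 le_rfl]) hCpos.le
  have hgrowth := mul_sub_le_sub_of_hasDerivAt_Ici hf hC le_rfl hT
  rw [sub_zero, mul_div_cancel₀ _ hCpos.ne'] at hgrowth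
  linarith [hB T hT]

end DerivLowerBound

lemma exists_gt_of_hasDerivAt_mul_one_sub_sq {k : ℝ} {e : ℝ → ℝ} (hk : 0 < k)
    (hle : ∀ t, 0 ≤ t → e t ≤ 1) (hmono : MonotoneOn e (Ici 0))
    (hdyn : ∀ t, 0 ≤ t → HasDerivAt e ((k / 2) * (1 - (e t) ^ 2)) t) (h0 : -1 < e 0)
    {a : ℝ} (ha : a < 1) : ∃ T, 0 ≤ T ∧ a < e T := by
  by_contra! hbelow
  have hrate : ∀ t, 0 ≤ t → (k / 2) * ((1 - a) * (1 + e 0)) ≤ (k / 2) * (1 - (e t) ^ 2) := by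
    intro t ht
    have he0 : e 0 ≤ e t := hmono self_mem_Ici ht ht
    have hfactor : (1 - a) * (1 + e 0) ≤ (1 - e t) * (1 + e t) :=
      mul_le_mul (by linarith [hbelow t ht]) (by linarith) (by linarith) (by linarith [hle t ht])
    gcongr
    linarith
  have hpos : 0 < (k / 2) * ((1 - a) * (1 + e 0)) := by
    have : 0 < 1 + e 0 := by linarith
    have : 0 < 1 - a := by linarith
    positivity
  exact hpos.not_ge (nonpos_of_le_hasDerivAt_of_bddAbove hdyn hrate hle)

/-- Consider the scalar closed-loop quaternion dynamics
`ė_φ = (k_ζ/2)‖e_ε‖² + ½ e_εᵀ w(t)` restricted to the unit sphere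
`e_φ² + ‖e_ε‖² = 1`, with `k_ζ > 0`. If `w ≡ 0`, so that
`ė_φ = (k_ζ/2)(1 − e_φ²)`, then the equilibrium `(e_φ, e_ε) = (−1, 0)` is unstable:
any initial condition with `e_φ(0) > −1` satisfies `e_φ(t)` nondecreasing and
`e_φ(t) → 1` as `t → ∞`. -/
theorem stmt10 (kζ : ℝ) (hk : 0 < kζ) (eφ : ℝ → ℝ)
    (hsphere : ∀ t, 0 ≤ t → eφ t ∈ Set.Icc (-1 : ℝ) 1)
    (hdyn : ∀ t, 0 ≤ t → HasDerivAt eφ ((kζ / 2) * (1 - (eφ t) ^ 2)) t)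
    (h0 : -1 < eφ 0) :
    MonotoneOn eφ (Set.Ici 0) ∧ Filter.Tendsto eφ Filter.atTop (nhds 1) := by
  have hle : ∀ t, 0 ≤ t → eφ t ≤ 1 := fun t ht => (hsphere t ht).2
  have hmono : MonotoneOn eφ (Ici 0) := by
    refine monotoneOn_Ici_of_hasDerivAt_nonneg hdyn fun t ht => ?_
    obtain ⟨hlo, hhi⟩ := hsphere t ht
    have : 0 ≤ 1 - eφ t ^ 2 := by nlinarith
    positivity
  refine ⟨hmono, tendsto_order.2 ⟨fun a ha => ?_, fun b hb => ?_⟩⟩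
  · obtain ⟨T, hT, haT⟩ := exists_gt_of_hasDerivAt_mul_one_sub_sq hk hle hmono hdyn h0 ha
    filter_upwards [eventually_ge_atTop T] with t ht
    exact haT.trans_le (hmono hT (hT.trans ht) ht)
  · filter_upwards [eventually_ge_atTop 0] with t ht
    exact (hle t ht).trans_lt hb
end
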